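/- Let m ≥ 1 be an integer, κ ≥ 1, q ∈ (0,1]. There exists a constant C₂ > 0, depending only on m, κ and q, with the following property. Let a = z_0 < z_1 < … < z_n = b be a partition whose element lengths h_k := z_k − z_{k−1} satisfy max(h_{k+1}/h_k, h_k/h_{k+1}) ≤ κ for all 1 ≤ k ≤ n−1. Fix j ∈ {1, …, n} and let J = [z_r, z_s] be a union of consecutive elements with r ≤ j−1 < j ≤ s, r ≥ max(j−1−m, 0) and s ≤ min(j+m, n). Suppose ψ ∈ L²(J) satisfies ‖1 − ψ‖²_{L²(J)} ≤ (1 − q)|J| and u ∈ L²([a,b]) satisfies ∫_J u(t) ψ(t) dt = 0. Then ‖u‖²_{L²(J)} ≤ C₂ |J| · Σ_{k = max(j−m, 0)}^{min(j+m−1, n)} |u|²_{H^{1/2}(ω_k)}, where ω_k := [z_{max(k−1,0)}, z_{min(k+1,n)}] denotes the node patch of z_k. -/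

import Mathlib

/-!
Write `J = [z_r, z_s]`. Since `u` is orthogonal to `ψ`, `∫_J u = ∫_J u (1 - ψ)`, and
Cauchy–Schwarz with `‖1 - ψ‖² ≤ (1 - q)|J|` gives `(∫_J u)² ≤ (1 - q)|J| ‖u‖²`; hence
`∫_J ∫_J (u x - u y)² = 2|J| ‖u‖² - 2 (∫_J u)² ≥ 2q|J| ‖u‖²`.

The double integral splits over pairs of elements `T_p × T_t` of `J`. Two neighbouring elements
lie in a common node patch, on which `(u x - u y)² ≤ |J|² (u x - u y)² / (x - y)²`. A distant
pair is reduced to closer ones by averaging over the middle element `C`,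
`|C| ∫_A ∫_B ≤ 2 (|B| ∫_A ∫_C + |A| ∫_B ∫_C)`, at the cost of a factor `4 κ^{2m}`, because the
at most `2m + 1` elements of `J` have lengths within a factor `κ^{2m}` of each other.
-/

open Set MeasureTheory

/-- Squared Sobolev–Slobodeckij seminorm `|u|_{H^{1/2}(s)}²`. -/
noncomputable def sobSemiSq (u : ℝ → ℝ) (s : Set ℝ) : ENNReal :=
  ∫⁻ x in s, ∫⁻ y in s, ENNReal.ofReal ((u x - u y) ^ 2 / (x - y) ^ 2)

/-- Squared `L²` norm `‖u‖_{L²(s)}²`. -/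
noncomputable def l2Sq (u : ℝ → ℝ) (s : Set ℝ) : ENNReal :=
  ∫⁻ x in s, ENNReal.ofReal ((u x) ^ 2)

open scoped ENNReal

section Poincare

variable {α : Type*} [MeasurableSpace α] {μ : Measure α}

theorem sq_integral_mul_le {f g : α → ℝ} (hf : MemLp f 2 μ) (hg : MemLp g 2 μ) :
    (∫ x, f x * g x ∂μ) ^ 2 ≤ (∫ x, f x ^ 2 ∂μ) * ∫ x, g x ^ 2 ∂μ := by
  have h2 : ENNReal.ofReal 2 = 2 := by norm_num
  have holder := integral_mul_le_Lp_mul_Lq_of_nonneg Real.HolderConjugate.two_two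
    (Filter.Eventually.of_forall fun x => abs_nonneg (f x))
    (Filter.Eventually.of_forall fun x => abs_nonneg (g x))
    (h2 ▸ hf.abs) (h2 ▸ hg.abs)
  simp only [Real.rpow_two, sq_abs] at holder
  calc (∫ x, f x * g x ∂μ) ^ 2 = |∫ x, f x * g x ∂μ| ^ 2 := (sq_abs _).symm
    _ ≤ (∫ x, |f x| * |g x| ∂μ) ^ 2 := by
        simp_rw [← abs_mul]
        exact pow_le_pow_left₀ (abs_nonneg _) abs_integral_le_integral_abs 2
    _ ≤ ((∫ x, f x ^ 2 ∂μ) ^ (1 / 2 : ℝ) * (∫ x, g x ^ 2 ∂μ) ^ (1 / 2 : ℝ)) ^ 2 :=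
        pow_le_pow_left₀ (integral_nonneg fun x => by positivity) holder 2
    _ = _ := by
        rw [mul_pow, ← Real.sqrt_eq_rpow, ← Real.sqrt_eq_rpow,
          Real.sq_sqrt (integral_nonneg fun x => sq_nonneg _),
          Real.sq_sqrt (integral_nonneg fun x => sq_nonneg _)]

variable [IsFiniteMeasure μ] {u : α → ℝ}

theorem lintegral_lintegral_ofReal_sq_sub (hu : MemLp u 2 μ) :
    ∫⁻ x, ∫⁻ y, ENNReal.ofReal ((u x - u y) ^ 2) ∂μ ∂μ
      = ENNReal.ofReal (2 * (μ.real univ * ∫ x, u x ^ 2 ∂μ - (∫ x, u x ∂μ) ^ 2)) := by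
  set A := ∫ x, u x ^ 2 ∂μ
  set B := ∫ x, u x ∂μ
  have hu1 : Integrable u μ := hu.integrable one_le_two
  have hu2 : Integrable (fun x => u x ^ 2) μ := hu.integrable_sq
  have hlin : ∀ a b : ℝ, Integrable (fun x => a * u x ^ 2 - b * u x) μ := fun a b =>
    (hu2.const_mul a).sub (hu1.const_mul b)
  have inner : ∀ x, ∫ y, (u x - u y) ^ 2 ∂μ = μ.real univ * u x ^ 2 - 2 * B * u x + A := by
    intro x
    have expand : (fun y => (u x - u y) ^ 2)
        = fun y => (1 * u y ^ 2 - 2 * u x * u y) + u x ^ 2 := by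
      ext y; ring
    rw [expand, integral_add (hlin _ _) (integrable_const _), integral_sub (hu2.const_mul _)
      (hu1.const_mul _), integral_const, integral_const_mul, integral_const_mul, smul_eq_mul]
    ring
  have hsq : ∀ x, Integrable (fun y => (u x - u y) ^ 2) μ := fun x =>
    ((memLp_const (u x)).sub hu).integrable_sq
  have hint : Integrable (fun x => μ.real univ * u x ^ 2 - 2 * B * u x + A) μ :=
    (hlin _ _).add (integrable_const _)
  calc ∫⁻ x, ∫⁻ y, ENNReal.ofReal ((u x - u y) ^ 2) ∂μ ∂μ
      = ∫⁻ x, ENNReal.ofReal (μ.real univ * u x ^ 2 - 2 * B * u x + A) ∂μ := by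
        refine lintegral_congr fun x => ?_
        rw [← inner x, ofReal_integral_eq_lintegral_ofReal (hsq x)
          (ae_of_all _ fun y => sq_nonneg _)]
    _ = ENNReal.ofReal (∫ x, (μ.real univ * u x ^ 2 - 2 * B * u x + A) ∂μ) := by
        refine (ofReal_integral_eq_lintegral_ofReal hint (ae_of_all _ fun x => ?_)).symm
        show 0 ≤ μ.real univ * u x ^ 2 - 2 * B * u x + A
        rw [← inner x]
        exact integral_nonneg fun y => sq_nonneg _
    _ = _ := by
        rw [integral_add (hlin _ _) (integrable_const _), integral_sub (hu2.const_mul _)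
          (hu1.const_mul _), integral_const_mul, integral_const_mul, integral_const, smul_eq_mul]
        congr 1
        ring

theorem ofReal_mul_lintegral_sq_le_of_integral_mul_eq_zero {ψ : α → ℝ} {q : ℝ} (hq : q ≤ 1)
    (hu : MemLp u 2 μ) (hψ : MemLp ψ 2 μ) (horth : ∫ x, u x * ψ x ∂μ = 0)
    (hψq : ∫⁻ x, ENNReal.ofReal ((1 - ψ x) ^ 2) ∂μ ≤ ENNReal.ofReal ((1 - q) * μ.real univ)) :
    ENNReal.ofReal (2 * q * μ.real univ) * ∫⁻ x, ENNReal.ofReal (u x ^ 2) ∂μ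
      ≤ ∫⁻ x, ∫⁻ y, ENNReal.ofReal ((u x - u y) ^ 2) ∂μ ∂μ := by
  have hg : MemLp (fun x => 1 - ψ x) 2 μ := (memLp_const 1).sub hψ
  have hG : ∫ x, (1 - ψ x) ^ 2 ∂μ ≤ (1 - q) * μ.real univ := by
    rwa [← ofReal_integral_eq_lintegral_ofReal hg.integrable_sq
      (ae_of_all _ fun x => sq_nonneg _), ENNReal.ofReal_le_ofReal_iff (by positivity)] at hψq
  have hmean : ∫ x, u x ∂μ = ∫ x, u x * (1 - ψ x) ∂μ := by
    have hsplit : ∫ x, u x * (1 - ψ x) ∂μ = ∫ x, u x ∂μ - ∫ x, u x * ψ x ∂μ := by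
      simp_rw [mul_sub, mul_one]
      exact integral_sub (hu.integrable one_le_two) (hu.integrable_mul hψ)
    rw [hsplit, horth, sub_zero]
  have hCS := sq_integral_mul_le hu hg
  have hA : 0 ≤ ∫ x, u x ^ 2 ∂μ := integral_nonneg fun x => sq_nonneg _
  rw [← ofReal_integral_eq_lintegral_ofReal hu.integrable_sq (ae_of_all _ fun x => sq_nonneg _),
    ← ENNReal.ofReal_mul' hA, lintegral_lintegral_ofReal_sq_sub hu, hmean]
  refine ENNReal.ofReal_le_ofReal ?_
  nlinarith [mul_le_mul_of_nonneg_left hG hA]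

end Poincare

theorem ofReal_sq_sub_le (a b c : ℝ) :
    ENNReal.ofReal ((a - b) ^ 2)
      ≤ 2 * ENNReal.ofReal ((a - c) ^ 2) + 2 * ENNReal.ofReal ((b - c) ^ 2) := by
  rw [← ENNReal.ofReal_ofNat 2, ← ENNReal.ofReal_mul zero_le_two,
    ← ENNReal.ofReal_mul zero_le_two, ← ENNReal.ofReal_add (by positivity) (by positivity)]
  exact ENNReal.ofReal_le_ofReal (by nlinarith [sq_nonneg (a + b - 2 * c)])

section PairSqDiff

variable {α : Type*} [MeasurableSpace α] {μ : Measure α} {u : α → ℝ}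

theorem setLIntegral_biUnion_finset_le {ι : Type*} (S : Finset ι) (T : ι → Set α)
    (f : α → ℝ≥0∞) : ∫⁻ x in ⋃ i ∈ S, T i, f x ∂μ ≤ ∑ i ∈ S, ∫⁻ x in T i, f x ∂μ := by
  classical
  induction S using Finset.induction_on with
  | empty => simp
  | insert i S hi ih =>
    rw [Finset.set_biUnion_insert, Finset.sum_insert hi]
    exact (lintegral_union_le _ _ _).trans (add_le_add_right ih _)

variable (μ u) in
noncomputable def pairSqDiff (A B : Set α) : ℝ≥0∞ :=
  ∫⁻ x in A, ∫⁻ y in B, ENNReal.ofReal ((u x - u y) ^ 2) ∂μ ∂μ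

variable [SFinite μ]

theorem measurable_setLIntegral_ofReal_sq_sub (hu : Measurable u) (B : Set α) :
    Measurable fun x => ∫⁻ y in B, ENNReal.ofReal ((u x - u y) ^ 2) ∂μ :=
  (by fun_prop : Measurable fun p : α × α => ENNReal.ofReal ((u p.1 - u p.2) ^ 2))
    |>.lintegral_prod_right'

theorem measure_mul_pairSqDiff_le (hu : Measurable u) (A B C : Set α) :
    μ C * pairSqDiff μ u A B ≤ 2 * (μ B * pairSqDiff μ u A C + μ A * pairSqDiff μ u B C) := by
  set g : α → ℝ≥0∞ := fun x => ∫⁻ ξ in C, ENNReal.ofReal ((u x - u ξ) ^ 2) ∂μ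
  have hg : Measurable g := measurable_setLIntegral_ofReal_sq_sub hu C
  have hpt : ∀ x y, μ C * ENNReal.ofReal ((u x - u y) ^ 2) ≤ 2 * g x + 2 * g y := by
    intro x y
    calc μ C * ENNReal.ofReal ((u x - u y) ^ 2)
        = ∫⁻ _ in C, ENNReal.ofReal ((u x - u y) ^ 2) ∂μ := by rw [setLIntegral_const, mul_comm]
      _ ≤ ∫⁻ ξ in C, (2 * ENNReal.ofReal ((u x - u ξ) ^ 2)
            + 2 * ENNReal.ofReal ((u y - u ξ) ^ 2)) ∂μ :=
        lintegral_mono fun ξ => ofReal_sq_sub_le _ _ _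
      _ = 2 * g x + 2 * g y := by
        rw [lintegral_add_left (by fun_prop), lintegral_const_mul _ (by fun_prop),
          lintegral_const_mul _ (by fun_prop)]
  calc μ C * pairSqDiff μ u A B
      ≤ ∫⁻ x in A, ∫⁻ y in B, μ C * ENNReal.ofReal ((u x - u y) ^ 2) ∂μ ∂μ :=
        (lintegral_const_mul_le _ _).trans (lintegral_mono fun x => lintegral_const_mul_le _ _)
    _ ≤ ∫⁻ x in A, ∫⁻ y in B, (2 * g x + 2 * g y) ∂μ ∂μ :=
        lintegral_mono fun x => lintegral_mono fun y => hpt x y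
    _ = ∫⁻ x in A, (2 * g x * μ B + 2 * ∫⁻ y in B, g y ∂μ) ∂μ := by
        refine lintegral_congr fun x => ?_
        rw [lintegral_add_left measurable_const, setLIntegral_const, lintegral_const_mul _ hg]
    _ = 2 * (μ B * pairSqDiff μ u A C + μ A * pairSqDiff μ u B C) := by
        rw [lintegral_add_right _ measurable_const, setLIntegral_const,
          lintegral_mul_const _ (hg.const_mul 2), lintegral_const_mul _ hg]
        unfold pairSqDiff
        ring

theorem pairSqDiff_le_pow_mul_of_adjacent (hu : Measurable u) {T : ℕ → Set α} {lo hi : ℕ}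
    {c B : ℝ≥0∞} (hc : 1 ≤ c) (hT : ∀ i ∈ Finset.Icc lo hi, μ (T i) ≠ 0 ∧ μ (T i) ≠ ∞)
    (hcmp : ∀ i ∈ Finset.Icc lo hi, ∀ k ∈ Finset.Icc lo hi, μ (T i) ≤ c * μ (T k))
    (hadj : ∀ i ∈ Finset.Icc lo hi, ∀ k ∈ Finset.Icc lo hi, i ≤ k + 1 → k ≤ i + 1 →
      pairSqDiff μ u (T i) (T k) ≤ B) (d : ℕ) :
    ∀ i ∈ Finset.Icc lo hi, ∀ k ∈ Finset.Icc lo hi, i ≤ k + d → k ≤ i + d →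
      pairSqDiff μ u (T i) (T k) ≤ (4 * c) ^ d * B := by
  induction d with
  | zero =>
    intro i hiI k hkI h1 h2
    simpa using hadj i hiI k hkI (by omega) (by omega)
  | succ d ih =>
    intro i hiI k hkI h1 h2
    by_cases hnear : i ≤ k + 1 ∧ k ≤ i + 1
    · refine (hadj i hiI k hkI hnear.1 hnear.2).trans (le_mul_of_one_le_left' (one_le_pow₀ ?_))
      exact hc.trans (le_mul_of_one_le_left' (by norm_num))
    -- averaging over the middle element halves the distance
    have hmid : (i + k) / 2 ∈ Finset.Icc lo hi := by
      simp only [Finset.mem_Icc] at hiI hkI ⊢; omega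
    obtain ⟨h0, htop⟩ := hT _ hmid
    rw [← ENNReal.mul_le_mul_iff_right h0 htop]
    calc μ (T ((i + k) / 2)) * pairSqDiff μ u (T i) (T k)
        ≤ 2 * (μ (T k) * pairSqDiff μ u (T i) (T ((i + k) / 2))
            + μ (T i) * pairSqDiff μ u (T k) (T ((i + k) / 2))) :=
          measure_mul_pairSqDiff_le hu _ _ _
      _ ≤ 2 * (c * μ (T ((i + k) / 2)) * ((4 * c) ^ d * B)
            + c * μ (T ((i + k) / 2)) * ((4 * c) ^ d * B)) := by
          gcongr
          · exact hcmp k hkI _ hmid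
          · exact ih i hiI _ hmid (by omega) (by omega)
          · exact hcmp i hiI _ hmid
          · exact ih k hkI _ hmid (by omega) (by omega)
      _ = μ (T ((i + k) / 2)) * ((4 * c) ^ (d + 1) * B) := by ring

theorem pairSqDiff_le_sum_of_subset_biUnion (hu : Measurable u) {ι : Type*} {S : Finset ι}
    {T : ι → Set α} {A B : Set α} (hA : A ⊆ ⋃ i ∈ S, T i) (hB : B ⊆ ⋃ i ∈ S, T i) :
    pairSqDiff μ u A B ≤ ∑ i ∈ S, ∑ k ∈ S, pairSqDiff μ u (T i) (T k) :=
  calc pairSqDiff μ u A B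
      ≤ ∫⁻ x in A, ∑ k ∈ S, ∫⁻ y in T k, ENNReal.ofReal ((u x - u y) ^ 2) ∂μ ∂μ :=
        lintegral_mono fun _ => (lintegral_mono_set hB).trans (setLIntegral_biUnion_finset_le _ _ _)
    _ ≤ ∑ i ∈ S, ∫⁻ x in T i, ∑ k ∈ S, ∫⁻ y in T k, ENNReal.ofReal ((u x - u y) ^ 2) ∂μ ∂μ :=
        (lintegral_mono_set hA).trans (setLIntegral_biUnion_finset_le _ _ _)
    _ = ∑ i ∈ S, ∑ k ∈ S, pairSqDiff μ u (T i) (T k) :=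
        Finset.sum_congr rfl fun _ _ =>
          lintegral_finsetSum _ fun _ _ => measurable_setLIntegral_ofReal_sq_sub hu _

end PairSqDiff

theorem le_pow_mul_of_adjacent {f : ℕ → ℝ} {c : ℝ} {lo hi : ℕ} (hc : 0 ≤ c)
    (hadj : ∀ i ∈ Finset.Icc lo hi, ∀ k ∈ Finset.Icc lo hi, i ≤ k + 1 → k ≤ i + 1 →
      f i ≤ c * f k) (d : ℕ) :
    ∀ i ∈ Finset.Icc lo hi, ∀ k ∈ Finset.Icc lo hi, i ≤ k + d → k ≤ i + d →
      f i ≤ c ^ d * f k := by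
  induction d with
  | zero =>
    intro i _ k _ h1 h2
    obtain rfl : i = k := by omega
    simp
  | succ d ih =>
    intro i hiI k hkI h1 h2
    obtain ⟨i', hi'I, h3, h4, h5, h6⟩ : ∃ i' ∈ Finset.Icc lo hi,
        i ≤ i' + 1 ∧ i' ≤ i + 1 ∧ i' ≤ k + d ∧ k ≤ i' + d := by
      simp only [Finset.mem_Icc] at hiI hkI ⊢
      rcases le_or_gt i k with h | h
      · exact ⟨min (i + 1) k, by omega⟩
      · exact ⟨i - 1, by omega⟩
    calc f i ≤ c * f i' := hadj i hiI i' hi'I h3 h4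
      _ ≤ c * (c ^ d * f k) := by gcongr; exact ih i' hi'I k hkI h5 h6
      _ = c ^ (d + 1) * f k := by ring

theorem l2Sq_congr_ae {u v : ℝ → ℝ} {s : Set ℝ} (h : u =ᵐ[volume.restrict s] v) :
    l2Sq u s = l2Sq v s :=
  lintegral_congr_ae (h.mono fun x hx => by simp only [hx])

theorem sobSemiSq_congr_ae {u v : ℝ → ℝ} {s : Set ℝ} (h : u =ᵐ[volume.restrict s] v) :
    sobSemiSq u s = sobSemiSq v s :=
  lintegral_congr_ae <| h.mono fun x hx =>
    lintegral_congr_ae <| h.mono fun y hy => by simp only [hx, hy]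

theorem ofReal_mul_l2Sq_le_pairSqDiff {u ψ : ℝ → ℝ} {c d q : ℝ} (hcd : c ≤ d) (hq : q ≤ 1)
    (hu : MemLp u 2 (volume.restrict (Icc c d))) (hψ : MemLp ψ 2 (volume.restrict (Icc c d)))
    (horth : ∫ t in Icc c d, u t * ψ t = 0)
    (hψq : l2Sq (fun t => 1 - ψ t) (Icc c d) ≤ ENNReal.ofReal ((1 - q) * (d - c))) :
    ENNReal.ofReal (2 * q * (d - c)) * l2Sq u (Icc c d)
      ≤ pairSqDiff volume u (Icc c d) (Icc c d) := by
  have hvol : (volume.restrict (Icc c d)).real univ = d - c := by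
    rw [measureReal_restrict_apply_univ, Real.volume_real_Icc_of_le hcd]
  rw [← hvol] at hψq ⊢
  exact ofReal_mul_lintegral_sq_le_of_integral_mul_eq_zero hq hu hψ horth hψq

theorem pairSqDiff_le_ofReal_sq_mul_sobSemiSq {u : ℝ → ℝ} {A B s : Set ℝ} {L : ℝ}
    (hA : MeasurableSet A) (hB : MeasurableSet B) (hAs : A ⊆ s) (hBs : B ⊆ s)
    (hL : ∀ x ∈ A, ∀ y ∈ B, |x - y| ≤ L) :
    pairSqDiff volume u A B ≤ ENNReal.ofReal (L ^ 2) * sobSemiSq u s := by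
  have hpt : ∀ x ∈ A, ∀ y ∈ B, ENNReal.ofReal ((u x - u y) ^ 2)
      ≤ ENNReal.ofReal (L ^ 2) * ENNReal.ofReal ((u x - u y) ^ 2 / (x - y) ^ 2) := by
    intro x hx y hy
    rcases eq_or_ne x y with rfl | hxy
    · simp
    rw [← ENNReal.ofReal_mul (sq_nonneg L)]
    refine ENNReal.ofReal_le_ofReal ?_
    calc (u x - u y) ^ 2 = (x - y) ^ 2 * ((u x - u y) ^ 2 / (x - y) ^ 2) := by
          field_simp [sub_ne_zero.2 hxy]
      _ ≤ L ^ 2 * ((u x - u y) ^ 2 / (x - y) ^ 2) := by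
          have hxyL := abs_le.1 (hL x hx y hy)
          exact mul_le_mul_of_nonneg_right (sq_le_sq' hxyL.1 hxyL.2) (by positivity)
  calc pairSqDiff volume u A B
      ≤ ∫⁻ x in A, ∫⁻ y in B, ENNReal.ofReal (L ^ 2)
          * ENNReal.ofReal ((u x - u y) ^ 2 / (x - y) ^ 2) :=
        setLIntegral_mono' hA fun x hx => setLIntegral_mono' hB fun y hy => hpt x hx y hy
    _ = ENNReal.ofReal (L ^ 2) * ∫⁻ x in A, ∫⁻ y in B,
          ENNReal.ofReal ((u x - u y) ^ 2 / (x - y) ^ 2) := by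
        simp_rw [lintegral_const_mul' _ _ ENNReal.ofReal_ne_top]
    _ ≤ ENNReal.ofReal (L ^ 2) * sobSemiSq u s := by
        gcongr
        exact (lintegral_mono_set hAs).trans (lintegral_mono fun x => lintegral_mono_set hBs)

-- The paper's element `T_k` and node patch `ω_k`; for `k = 0` the truncated `k - 1` is `0`.
noncomputable def meshElement (z : ℕ → ℝ) (k : ℕ) : Set ℝ := Icc (z (k - 1)) (z k)

noncomputable def nodePatch (z : ℕ → ℝ) (n k : ℕ) : Set ℝ :=
  Icc (z (k - 1)) (z (min (k + 1) n))

theorem Icc_subset_biUnion_meshElement (z : ℕ → ℝ) {r s : ℕ} (hrs : r < s) :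
    Icc (z r) (z s) ⊆ ⋃ p ∈ Finset.Icc (r + 1) s, meshElement z p := by
  induction s, hrs using Nat.le_induction with
  | base =>
    intro x hx
    exact mem_biUnion (x := r + 1) (by simp) (by simpa [meshElement] using hx)
  | succ s hrs ih =>
    intro x hx
    rcases le_or_gt x (z s) with h | h
    · refine biUnion_mono (fun p hp => ?_) (fun _ _ => le_rfl) (ih ⟨hx.1, h⟩)
      simp only [Finset.coe_Icc, mem_Icc] at hp ⊢
      omega
    · exact mem_biUnion (x := s + 1) (Finset.mem_Icc.2 (by omega)) ⟨h.le, hx.2⟩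

theorem meshElement_subset_Icc {z : ℕ → ℝ} {n r s p : ℕ} (hz : MonotoneOn z (Iic n))
    (hsn : s ≤ n) (hp : p ∈ Finset.Icc (r + 1) s) : meshElement z p ⊆ Icc (z r) (z s) := by
  rw [Finset.mem_Icc] at hp
  exact Icc_subset_Icc (hz (mem_Iic.2 (by omega)) (mem_Iic.2 (by omega)) (by omega))
    (hz (mem_Iic.2 (by omega)) (mem_Iic.2 hsn) hp.2)

theorem exists_nodePatch_superset {z : ℕ → ℝ} {n m j r s p t : ℕ} (hz : MonotoneOn z (Iic n))
    (hm : 1 ≤ m) (hrm : j - 1 - m ≤ r) (hsm : s ≤ j + m) (hsn : s ≤ n)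
    (hp : p ∈ Finset.Icc (r + 1) s) (ht : t ∈ Finset.Icc (r + 1) s) (hpt : p ≤ t + 1)
    (htp : t ≤ p + 1) : ∃ k ∈ Finset.Icc (j - m) (min (j + m - 1) n),
      meshElement z p ⊆ nodePatch z n k ∧ meshElement z t ⊆ nodePatch z n k := by
  rw [Finset.mem_Icc] at hp ht
  have hz' : ∀ a b, a ≤ b → b ≤ n → z a ≤ z b := fun a b hab hb =>
    hz (mem_Iic.2 (hab.trans hb)) (mem_Iic.2 hb) hab
  refine ⟨min (min p t) (j + m - 1), Finset.mem_Icc.2 ⟨by omega, by omega⟩,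
    Icc_subset_Icc (hz' _ _ (by omega) (by omega)) (hz' _ _ (by omega) (by omega)),
    Icc_subset_Icc (hz' _ _ (by omega) (by omega)) (hz' _ _ (by omega) (by omega))⟩

theorem pairSqDiff_meshElement_le_sum_sobSemiSq {u : ℝ → ℝ} {z : ℕ → ℝ} {n m j r s p t : ℕ}
    (hz : MonotoneOn z (Iic n)) (hm : 1 ≤ m) (hrm : j - 1 - m ≤ r) (hsm : s ≤ j + m)
    (hsn : s ≤ n) (hp : p ∈ Finset.Icc (r + 1) s) (ht : t ∈ Finset.Icc (r + 1) s)
    (hpt : p ≤ t + 1) (htp : t ≤ p + 1) :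
    pairSqDiff volume u (meshElement z p) (meshElement z t)
      ≤ ENNReal.ofReal ((z s - z r) ^ 2)
        * ∑ k ∈ Finset.Icc (j - m) (min (j + m - 1) n), sobSemiSq u (nodePatch z n k) := by
  obtain ⟨k, hk, hpk, htk⟩ := exists_nodePatch_superset hz hm hrm hsm hsn hp ht hpt htp
  have hpJ := meshElement_subset_Icc hz hsn hp
  have htJ := meshElement_subset_Icc hz hsn ht
  calc pairSqDiff volume u (meshElement z p) (meshElement z t)
      ≤ ENNReal.ofReal ((z s - z r) ^ 2) * sobSemiSq u (nodePatch z n k) := by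
        refine pairSqDiff_le_ofReal_sq_mul_sobSemiSq measurableSet_Icc measurableSet_Icc
          hpk htk fun x hx y hy => abs_sub_le_iff.2 ⟨?_, ?_⟩
        · linarith [(hpJ hx).2, (htJ hy).1]
        · linarith [(hpJ hx).1, (htJ hy).2]
    _ ≤ _ := by
        gcongr
        exact Finset.single_le_sum (f := fun k => sobSemiSq u (nodePatch z n k))
          (fun _ _ => zero_le) hk

theorem width_le_mul_width_of_adjacent {z : ℕ → ℝ} {n : ℕ} {κ : ℝ} (hz : StrictMonoOn z (Iic n))
    (hκ : 1 ≤ κ) (hrat : ∀ k, 1 ≤ k → k < n →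
      (z (k + 1) - z k) / (z k - z (k - 1)) ≤ κ ∧ (z k - z (k - 1)) / (z (k + 1) - z k) ≤ κ) :
    ∀ p ∈ Finset.Icc 1 n, ∀ t ∈ Finset.Icc 1 n, p ≤ t + 1 → t ≤ p + 1 →
      z p - z (p - 1) ≤ κ * (z t - z (t - 1)) := by
  intro p hp t ht hpt htp
  rw [Finset.mem_Icc] at hp ht
  have hwidth : ∀ k, 1 ≤ k → k ≤ n → 0 < z k - z (k - 1) := fun k hk1 hkn =>
    sub_pos.2 (hz (mem_Iic.2 (by omega)) (mem_Iic.2 hkn) (by omega))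
  rcases (by omega : t = p ∨ t = p + 1 ∨ p = t + 1) with rfl | rfl | rfl
  · exact le_mul_of_one_le_left (hwidth t ht.1 ht.2).le hκ
  · simpa using (div_le_iff₀ (hwidth (p + 1) ht.1 ht.2)).1 (hrat p hp.1 (by omega)).2
  · simpa using (div_le_iff₀ (hwidth t ht.1 ht.2)).1 (hrat t ht.1 (by omega)).1

theorem pairSqDiff_Icc_le_sum_sobSemiSq {u : ℝ → ℝ} (hu : Measurable u) {z : ℕ → ℝ}
    {n m j r s : ℕ} {κ : ℝ} (hz : StrictMonoOn z (Iic n)) (hκ : 1 ≤ κ)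
    (hadj : ∀ p ∈ Finset.Icc 1 n, ∀ t ∈ Finset.Icc 1 n, p ≤ t + 1 → t ≤ p + 1 →
      z p - z (p - 1) ≤ κ * (z t - z (t - 1)))
    (hm : 1 ≤ m) (hrs : r < s) (hrm : j - 1 - m ≤ r) (hsm : s ≤ j + m)
    (hsn : s ≤ n) :
    pairSqDiff volume u (Icc (z r) (z s)) (Icc (z r) (z s))
      ≤ ENNReal.ofReal ((2 * m + 1) ^ 2 * (4 * κ ^ (2 * m)) ^ (2 * m) * (z s - z r) ^ 2)
        * ∑ k ∈ Finset.Icc (j - m) (min (j + m - 1) n), sobSemiSq u (nodePatch z n k) := by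
  set S := ∑ k ∈ Finset.Icc (j - m) (min (j + m - 1) n), sobSemiSq u (nodePatch z n k)
  set I := Finset.Icc (r + 1) s
  have hIn : ∀ p ∈ I, p ∈ Finset.Icc 1 n := fun p hp => by
    simp only [I, Finset.mem_Icc] at hp ⊢; omega
  have hvol : ∀ p ∈ I, volume (meshElement z p) ≠ 0 ∧ volume (meshElement z p) ≠ ∞ := by
    intro p hp
    simp only [I, Finset.mem_Icc] at hp
    simpa [meshElement] using hz (mem_Iic.2 (by omega)) (mem_Iic.2 (by omega)) (by omega)
  have hcmp : ∀ p ∈ I, ∀ t ∈ I, volume (meshElement z p)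
      ≤ ENNReal.ofReal (κ ^ (2 * m)) * volume (meshElement z t) := by
    intro p hp t ht
    simp only [meshElement, Real.volume_Icc]
    rw [← ENNReal.ofReal_mul (by positivity)]
    refine ENNReal.ofReal_le_ofReal (le_pow_mul_of_adjacent (by positivity) hadj (2 * m) p
      (hIn p hp) t (hIn t ht) ?_ ?_) <;> simp only [I, Finset.mem_Icc] at hp ht <;> omega
  have hpair := pairSqDiff_le_pow_mul_of_adjacent hu (T := meshElement z)
    (ENNReal.one_le_ofReal.2 (one_le_pow₀ hκ)) hvol hcmp (fun p hp t ht =>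
      pairSqDiff_meshElement_le_sum_sobSemiSq (j := j) hz.monotoneOn hm hrm hsm hsn hp ht) (2 * m)
  calc pairSqDiff volume u (Icc (z r) (z s)) (Icc (z r) (z s))
      ≤ ∑ p ∈ I, ∑ t ∈ I, pairSqDiff volume u (meshElement z p) (meshElement z t) :=
        pairSqDiff_le_sum_of_subset_biUnion hu (Icc_subset_biUnion_meshElement z (by omega))
          (Icc_subset_biUnion_meshElement z (by omega))
    _ ≤ ∑ p ∈ I, ∑ t ∈ I, (4 * ENNReal.ofReal (κ ^ (2 * m))) ^ (2 * m)
          * (ENNReal.ofReal ((z s - z r) ^ 2) * S) :=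
        Finset.sum_le_sum fun p hp => Finset.sum_le_sum fun t ht => hpair p hp t ht
          (by simp only [I, Finset.mem_Icc] at hp ht; omega)
          (by simp only [I, Finset.mem_Icc] at hp ht; omega)
    _ = I.card * (I.card
          * (ENNReal.ofReal ((4 * κ ^ (2 * m)) ^ (2 * m) * (z s - z r) ^ 2) * S)) := by
        rw [ENNReal.ofReal_mul (by positivity),
          ENNReal.ofReal_pow (by positivity : (0 : ℝ) ≤ 4 * κ ^ (2 * m)),
          ENNReal.ofReal_mul (p := 4) zero_le_four, ENNReal.ofReal_ofNat]
        simp only [Finset.sum_const, nsmul_eq_mul, mul_assoc]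
    _ ≤ ENNReal.ofReal (2 * m + 1) * (ENNReal.ofReal (2 * m + 1)
          * (ENNReal.ofReal ((4 * κ ^ (2 * m)) ^ (2 * m) * (z s - z r) ^ 2) * S)) := by
        have hcard : (I.card : ℝ≥0∞) ≤ ENNReal.ofReal (2 * m + 1) := by
          rw [Nat.card_Icc, ← ENNReal.ofReal_natCast]
          exact ENNReal.ofReal_le_ofReal (by norm_cast; omega)
        gcongr
    _ = _ := by
        rw [← mul_assoc, ← mul_assoc, ← ENNReal.ofReal_mul (by positivity),
          ← ENNReal.ofReal_mul (by positivity)]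
        ring_nf

theorem l2Sq_Icc_le_ofReal_mul_sum_sobSemiSq {u ψ : ℝ → ℝ} (hu : Measurable u) {z : ℕ → ℝ}
    {n m j r s : ℕ} {κ q : ℝ} (hz : StrictMonoOn z (Iic n)) (hκ : 1 ≤ κ)
    (hadj : ∀ p ∈ Finset.Icc 1 n, ∀ t ∈ Finset.Icc 1 n, p ≤ t + 1 → t ≤ p + 1 →
      z p - z (p - 1) ≤ κ * (z t - z (t - 1)))
    (hm : 1 ≤ m) (hrs : r < s) (hrm : j - 1 - m ≤ r) (hsm : s ≤ j + m) (hsn : s ≤ n)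
    (hq0 : 0 < q) (hq1 : q ≤ 1) (hu2 : MemLp u 2 (volume.restrict (Icc (z r) (z s))))
    (hψ : MemLp ψ 2 (volume.restrict (Icc (z r) (z s))))
    (horth : ∫ t in Icc (z r) (z s), u t * ψ t = 0)
    (hψq : l2Sq (fun t => 1 - ψ t) (Icc (z r) (z s)) ≤ ENNReal.ofReal ((1 - q) * (z s - z r))) :
    l2Sq u (Icc (z r) (z s))
      ≤ ENNReal.ofReal ((2 * m + 1) ^ 2 * (4 * κ ^ (2 * m)) ^ (2 * m) / (2 * q) * (z s - z r))
        * ∑ k ∈ Finset.Icc (j - m) (min (j + m - 1) n), sobSemiSq u (nodePatch z n k) := by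
  have hJ : z r < z s := hz (mem_Iic.2 (by omega)) (mem_Iic.2 hsn) hrs
  have hP := ofReal_mul_l2Sq_le_pairSqDiff hJ.le hq1 hu2 hψ horth hψq
  have hL := pairSqDiff_Icc_le_sum_sobSemiSq (j := j) hu hz hκ hadj hm hrs hrm hsm hsn
  have hpos : ENNReal.ofReal (2 * q * (z s - z r)) ≠ 0 :=
    (ENNReal.ofReal_pos.2 (by nlinarith)).ne'
  refine (ENNReal.mul_le_mul_iff_right hpos ENNReal.ofReal_ne_top).1
    (hP.trans (hL.trans_eq ?_))
  rw [← mul_assoc, ← ENNReal.ofReal_mul (by nlinarith)]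
  congr 2
  field_simp

/-- Lemma 3.5 (case `m > 0`): orthogonality of `u` against a bump function on a
patch `J = [z_r, z_s]` of at most `m` layers around the element `[z_{j-1}, z_j]`
yields a local `L²`-bound by the neighbouring node-patch seminorms. -/
theorem local_l2_bound_by_patch_seminorms
    (m : ℕ) (hm : 1 ≤ m) (κ : ℝ) (hκ : 1 ≤ κ) (q : ℝ) (hq0 : 0 < q) (hq1 : q ≤ 1) :
    ∃ C₂ : ℝ, 0 < C₂ ∧
      ∀ (a b : ℝ) (n : ℕ) (z : ℕ → ℝ),
        1 ≤ n → z 0 = a → z n = b →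
        (∀ k < n, z k < z (k + 1)) →
        (∀ k, 1 ≤ k → k < n →
          (z (k + 1) - z k) / (z k - z (k - 1)) ≤ κ ∧
          (z k - z (k - 1)) / (z (k + 1) - z k) ≤ κ) →
        ∀ j, 1 ≤ j → j ≤ n →
        ∀ r s : ℕ, r ≤ j - 1 → j ≤ s → j - 1 - m ≤ r → s ≤ min (j + m) n →
        ∀ ψ : ℝ → ℝ, MemLp ψ 2 (volume.restrict (Icc (z r) (z s))) →
          l2Sq (fun t => 1 - ψ t) (Icc (z r) (z s))
            ≤ ENNReal.ofReal ((1 - q) * (z s - z r)) →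
        ∀ u : ℝ → ℝ, MemLp u 2 (volume.restrict (Icc a b)) →
          (∫ t in Icc (z r) (z s), u t * ψ t) = 0 →
          l2Sq u (Icc (z r) (z s))
            ≤ ENNReal.ofReal (C₂ * (z s - z r)) *
                ∑ k ∈ Finset.Icc (j - m) (min (j + m - 1) n),
                  sobSemiSq u (Icc (z (k - 1)) (z (min (k + 1) n))) := by
  refine ⟨(2 * m + 1) ^ 2 * (4 * κ ^ (2 * m)) ^ (2 * m) / (2 * q), by positivity,
    fun a b n z _ hz0 hzn hlt hrat j hj1 _ r s hrj hjs hrm hsm ψ hψ hψq u hu horth => ?_⟩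
  have hz : StrictMonoOn z (Iic n) := strictMonoOn_Iic_of_lt_succ hlt
  have hsn : s ≤ n := hsm.trans (min_le_right _ _)
  have hsub : ∀ k ≤ n, ∀ l ≤ n, Icc (z k) (z l) ⊆ Icc a b := fun k hk l hl =>
    hz0 ▸ hzn ▸ Icc_subset_Icc (hz.monotoneOn (mem_Iic.2 n.zero_le) (mem_Iic.2 hk) k.zero_le)
      (hz.monotoneOn (mem_Iic.2 hl) (mem_Iic.2 le_rfl) hl)
  set v := hu.1.mk u
  have huv : ∀ k ≤ n, ∀ l ≤ n, u =ᵐ[volume.restrict (Icc (z k) (z l))] v :=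
    fun k hk l hl => ae_restrict_of_ae_restrict_of_subset (hsub k hk l hl) hu.1.ae_eq_mk
  have huvJ := huv r (by omega) s hsn
  rw [l2Sq_congr_ae huvJ, Finset.sum_congr rfl fun k hk => sobSemiSq_congr_ae
    (huv (k - 1) (by have := Finset.mem_Icc.1 hk; omega) _ (min_le_right _ _))]
  exact l2Sq_Icc_le_ofReal_mul_sum_sobSemiSq hu.1.stronglyMeasurable_mk.measurable hz hκ
    (width_le_mul_width_of_adjacent hz hκ hrat) hm (by omega) (by omega) (by omega) hsn hq0 hq1
    ((hu.mono_measure (Measure.restrict_mono (hsub r (by omega) s hsn) le_rfl)).ae_eq huvJ) hψ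
    (by rw [← horth]; exact integral_congr_ae (huvJ.symm.mul (ae_eq_refl ψ))) hψq
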